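/- arXiv:0807.4735 — 5 statements merged into one kernel-verified Lean document; each statement's English description precedes it below -/
import Mathlib

section
/- If ū ⊆ co(V) is a subalgebra of nilpotents, then every composition X_1 ∘ X_2 ∘ ⋯ ∘ X_{2p+1} of 2p+1 elements of ū is the zero endomorphism; that is, the order of nilpotence o(ū) is at most 2p+1. -/
/-!
A nilpotent conformal endomorphism `X` is skew for `B`: if `B(Xu, v) + B(u, Xv) = λ B(u, v)` with
`λ ≠ 0`, then `B(Xᵏu, v) = B(u, (λ - X)ᵏv)` with `λ - X` invertible, so `B = 0`.

By Engel's theorem `V` is a nilpotent `ū`-module. Write `C₀ = V ⊇ C₁ ⊇ ⋯` for its lower central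
series, so that a composition of `k` elements of `ū` maps `V` into `Cₖ`. Skewness gives `Cᵢ ⟂ Cⱼ`
whenever `Cᵢ₊ⱼ = 0`. If `N` is the first index with `C_N = 0`, then `C_h` with `h = ⌈N/2⌉` is
isotropic, hence of dimension at most `p`. The series drops strictly before `N`, so that dimension
is at least `⌊N/2⌋`. Therefore `N ≤ 2p + 1`.
-/

/-- A bilinear form `B` on a real vector space has signature `(p,q)` if it diagonalizes in some
basis with `p` entries equal to `−1` followed by `q` entries equal to `1`. -/
def HasSignature (V : Type*) [AddCommGroup V] [Module ℝ V]
    (B : V →ₗ[ℝ] V →ₗ[ℝ] ℝ) (p q : ℕ) : Prop :=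
  ∃ b : Module.Basis (Fin (p+q)) ℝ V, ∀ i j, B (b i) (b j) =
    if i = j then (if (i:ℕ) < p then -1 else 1) else 0

/-- Membership in the conformal Lie algebra `co(V)` of a bilinear form `B`:
`X` is infinitesimally conformal if `B(Xu, v) + B(u, Xv) = λ(X)·B(u,v)` for some `λ(X) ∈ ℝ`. -/
def MemCO (V : Type*) [AddCommGroup V] [Module ℝ V]
    (B : V →ₗ[ℝ] V →ₗ[ℝ] ℝ) (X : Module.End ℝ V) : Prop :=
  ∃ lam : ℝ, ∀ u v : V, B (X u) v + B u (X v) = lam * B u v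

open Module LieModule LieAlgebra.InvariantForm

namespace LinearMap

section Conformal

variable {K V : Type*} [Field K] [AddCommGroup V] [Module K V]
  {B : V →ₗ[K] V →ₗ[K] K} {X : Module.End K V} {c : K}

theorem apply_apply_eq_apply_sub_apply (h : ∀ u v, B (X u) v + B u (X v) = c * B u v)
    (u v : V) : B (X u) v = B u ((c • 1 - X) v) := by
  simp only [sub_apply, smul_apply, Module.End.one_apply, map_sub, map_smul, smul_eq_mul]
  linear_combination h u v

theorem apply_pow_apply_eq_apply_sub_pow_apply
    (h : ∀ u v, B (X u) v + B u (X v) = c * B u v) (k : ℕ) (u v : V) :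
    B ((X ^ k) u) v = B u (((c • 1 - X) ^ k) v) := by
  induction k generalizing u with
  | zero => rfl
  | succ k ih =>
    rw [pow_succ, Module.End.mul_apply, ih, apply_apply_eq_apply_sub_apply h, pow_succ',
      Module.End.mul_apply]

theorem isSkewAdjoint_of_isNilpotent_of_conformal (hX : IsNilpotent X)
    (h : ∀ u v, B (X u) v + B u (X v) = c * B u v) : IsSkewAdjoint B X := by
  rcases eq_or_ne c 0 with rfl | hc
  · intro u v
    rw [Pi.neg_apply, map_neg]
    linear_combination h u v
  suffices B = 0 by simp [this, IsSkewAdjoint, IsAdjointPair]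
  have hunit : IsUnit (c • 1 - X) := by
    rw [sub_eq_neg_add, ← Algebra.algebraMap_eq_smul_one]
    exact hX.neg.isUnit_add_right_of_commute ((IsUnit.mk0 c hc).map _)
      (Algebra.commute_algebraMap_right c _)
  obtain ⟨k, hk⟩ := hX
  ext u w
  obtain ⟨v, rfl⟩ := ((Module.End.isUnit_iff _).mp (hunit.pow k)).surjective w
  rw [← apply_pow_apply_eq_apply_sub_pow_apply h, hk]
  simp

end Conformal

theorem apply_self_eq_sum_mul_sq {R V ι : Type*} [CommRing R] [AddCommGroup V] [Module R V]
    [Fintype ι] [DecidableEq ι] {B : V →ₗ[R] V →ₗ[R] R} (b : Basis ι R V) (ε : ι → R)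
    (hb : ∀ i j, B (b i) (b j) = if i = j then ε i else 0) (x : V) :
    B x x = ∑ i, ε i * b.repr x i ^ 2 := by
  conv_lhs => rw [← b.sum_repr x]
  simp only [map_sum, map_smul, LinearMap.sum_apply, LinearMap.smul_apply, hb, smul_eq_mul,
    mul_ite, mul_zero, Finset.sum_ite_eq', Finset.mem_univ, if_true]
  exact Finset.sum_congr rfl fun i _ => by ring

end LinearMap

theorem HasSignature.finrank_le_of_isotropic {V : Type*} [AddCommGroup V] [Module ℝ V]
    {B : V →ₗ[ℝ] V →ₗ[ℝ] ℝ} {p q : ℕ} (hsig : HasSignature V B p q) {W : Submodule ℝ V}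
    (hW : ∀ x ∈ W, B x x = 0) : finrank ℝ W ≤ p := by
  obtain ⟨b, hb⟩ := hsig
  -- `B` is positive definite on the span of the last `q` basis vectors, which thus meets `W` in `0`
  let f : W →ₗ[ℝ] Fin p → ℝ :=
    LinearMap.funLeft ℝ ℝ (Fin.castAdd q) ∘ₗ b.equivFun.toLinearMap ∘ₗ W.subtype
  suffices Function.Injective f by simpa using LinearMap.finrank_le_finrank_of_injective this
  refine (injective_iff_map_eq_zero f).mpr fun ⟨x, hx⟩ hfx => ?_
  have hneg : ∀ i : Fin (p + q), (i : ℕ) < p → b.repr x i = 0 :=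
    fun i hi => congr_fun hfx ⟨i, hi⟩
  have hsq : ∑ i, b.repr x i ^ 2 = 0 := by
    rw [← hW x hx, LinearMap.apply_self_eq_sum_mul_sq b _ hb]
    refine Finset.sum_congr rfl fun i _ => ?_
    split_ifs with hi
    · simp [hneg i hi]
    · rw [one_mul]
  have hrepr : b.repr x = 0 := Finsupp.ext fun i => pow_eq_zero_iff two_ne_zero |>.mp <|
    (Finset.sum_eq_zero_iff_of_nonneg fun i _ => sq_nonneg _).mp hsq i (Finset.mem_univ i)
  simpa using hrepr

namespace LieModule

variable {R L M : Type*} [CommRing R] [LieRing L] [LieAlgebra R L] [AddCommGroup M] [Module R M]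
  [LieRingModule L M]

theorem lowerCentralSeries_le_orthogonal {B : LinearMap.BilinForm R M} (hB : B.lieInvariant L)
    {i j : ℕ} (h : lowerCentralSeries R L M (i + j) = ⊥) :
    lowerCentralSeries R L M j ≤ orthogonal B hB (lowerCentralSeries R L M i) := by
  induction j generalizing i with
  | zero =>
    rw [add_zero] at h
    intro y _
    rw [mem_orthogonal]
    intro x hx
    rw [h, LieSubmodule.mem_bot] at hx
    rw [hx, map_zero, LinearMap.zero_apply]
  | succ j ih =>
    rw [lowerCentralSeries_succ, LieSubmodule.lie_le_iff]
    intro z _ y hy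
    rw [mem_orthogonal]
    intro x hx
    have hzx : ⁅z, x⁆ ∈ lowerCentralSeries R L M (i + 1) := by
      rw [lowerCentralSeries_succ]
      exact LieSubmodule.lie_mem_lie (LieSubmodule.mem_top z) hx
    have h' : lowerCentralSeries R L M (i + 1 + j) = ⊥ := by
      rwa [Nat.add_right_comm]
    rw [← neg_eq_zero, ← hB]
    exact (mem_orthogonal _ _ _ _).mp (ih h' hy) _ hzx

variable [LieModule R L M]

theorem foldr_toEnd_mul_apply_mem_lowerCentralSeries {k : ℕ} (x : Fin k → L) (m : M) :
    Fin.foldr k (fun i acc => toEnd R L M (x i) * acc) 1 m ∈ lowerCentralSeries R L M k := by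
  induction k with
  | zero => exact LieSubmodule.mem_top _
  | succ k ih =>
    rw [Fin.foldr_succ, Module.End.mul_apply, toEnd_apply_apply, lowerCentralSeries_succ]
    exact LieSubmodule.lie_mem_lie (LieSubmodule.mem_top _) (ih _)

theorem lowerCentralSeries_succ_lt [IsNilpotent L M] {k : ℕ}
    (h : lowerCentralSeries R L M k ≠ ⊥) :
    lowerCentralSeries R L M (k + 1) < lowerCentralSeries R L M k := by
  refine (antitone_lowerCentralSeries R L M k.le_succ).lt_of_ne fun heq => h ?_
  have hstable : ∀ d, lowerCentralSeries R L M (k + d) = lowerCentralSeries R L M k := by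
    intro d
    induction d with
    | zero => rfl
    | succ d ih => rw [← add_assoc, lowerCentralSeries_succ, ih, ← lowerCentralSeries_succ, heq]
  obtain ⟨n, hn⟩ := IsNilpotent.nilpotent R L M
  rw [← hstable n, eq_bot_iff, ← hn]
  exact antitone_lowerCentralSeries R L M (Nat.le_add_left n k)

section Field

variable {K L M : Type*} [Field K] [LieRing L] [LieAlgebra K L] [AddCommGroup M] [Module K M]
  [LieRingModule L M] [LieModule K L M] [FiniteDimensional K M] [IsNilpotent L M]

theorem lt_finrank_lowerCentralSeries {k m : ℕ} (h : lowerCentralSeries K L M (k + m) ≠ ⊥) :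
    m < finrank K (lowerCentralSeries K L M k) := by
  induction m generalizing k with
  | zero => exact Module.finrank_pos_iff.mpr ((LieSubmodule.nontrivial_iff_ne_bot K L M).mpr h)
  | succ m ih =>
    have hk : lowerCentralSeries K L M k ≠ ⊥ :=
      ne_bot_of_le_ne_bot h (antitone_lowerCentralSeries K L M (Nat.le_add_right k (m + 1)))
    have hsucc : m < finrank K (lowerCentralSeries K L M (k + 1)) :=
      ih (by rwa [Nat.add_right_comm])
    have hlt : finrank K (lowerCentralSeries K L M (k + 1)) <
        finrank K (lowerCentralSeries K L M k) :=
      Submodule.finrank_lt_finrank_of_lt <|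
        (LieSubmodule.toSubmodule_orderEmbedding K L M).lt_iff_lt.mpr
          (lowerCentralSeries_succ_lt hk)
    omega

theorem lowerCentralSeries_eq_bot_of_finrank_le_of_isotropic {B : LinearMap.BilinForm K M}
    (hB : B.lieInvariant L) {p : ℕ}
    (hiso : ∀ W : Submodule K M, (∀ x ∈ W, B x x = 0) → finrank K W ≤ p) :
    lowerCentralSeries K L M (2 * p + 1) = ⊥ := by
  classical
  let N := Nat.find (IsNilpotent.nilpotent K L M)
  have hN : lowerCentralSeries K L M N = ⊥ := Nat.find_spec (IsNilpotent.nilpotent K L M)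
  have hbot_of_le {n : ℕ} (hn : N ≤ n) : lowerCentralSeries K L M n = ⊥ :=
    eq_bot_iff.mpr (hN ▸ antitone_lowerCentralSeries K L M hn)
  by_contra hne
  have hlt : 2 * p + 1 < N := by
    by_contra hle
    exact hne (hbot_of_le (not_lt.mp hle))
  set h := (N + 1) / 2
  have hisotropic : ∀ x ∈ lowerCentralSeries K L M h, B x x = 0 := fun x hx =>
    (mem_orthogonal _ _ _ _).mp (lowerCentralSeries_le_orthogonal hB (hbot_of_le (by omega)) hx)
      x hx
  have hdim : N - 1 - h < finrank K (lowerCentralSeries K L M h) :=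
    lt_finrank_lowerCentralSeries <| by
      rw [show h + (N - 1 - h) = N - 1 by omega]
      exact Nat.find_min (IsNilpotent.nilpotent K L M) (by omega)
  have hle : finrank K (lowerCentralSeries K L M h) ≤ p := hiso _ hisotropic
  omega

end Field

end LieModule

attribute [local instance 100] LieRing.ofAssociativeRing

/-- If `ū ⊆ co(V)` is a Lie subalgebra all of whose elements are nilpotent endomorphisms,
where `B` has signature `(p,q)`, then every composition of `2p+1` elements of `ū` vanishes:
the order of nilpotence of `ū` is at most `2p+1`. -/
theorem order_of_nilpotence_le_of_subalgebra_of_nilpotents_in_co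
    (V : Type*) [AddCommGroup V] [Module ℝ V] [FiniteDimensional ℝ V]
    (p q : ℕ) (B : V →ₗ[ℝ] V →ₗ[ℝ] ℝ) (hsig : HasSignature V B p q)
    (u : LieSubalgebra ℝ (Module.End ℝ V))
    (hco : ∀ X ∈ u, MemCO V B X)
    (hnil : ∀ X ∈ u, IsNilpotent X) :
    ∀ X : Fin (2*p+1) → Module.End ℝ V, (∀ i, X i ∈ u) →
      Fin.foldr (2*p+1) (fun i acc => X i * acc) 1 = 0 := by
  intro X hX
  have hB : LinearMap.BilinForm.lieInvariant u B := by
    rintro ⟨Z, hZ⟩ y z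
    obtain ⟨c, hc⟩ := hco Z hZ
    rw [← map_neg]
    exact LinearMap.isSkewAdjoint_of_isNilpotent_of_conformal (hnil Z hZ) hc y z
  have : LieModule.IsNilpotent u V := isNilpotent_iff_forall'.mpr fun Z => hnil Z Z.2
  have hbot : lowerCentralSeries ℝ u V (2 * p + 1) = ⊥ :=
    lowerCentralSeries_eq_bot_of_finrank_le_of_isotropic hB fun _ => hsig.finrank_le_of_isotropic
  ext v
  have hmem :=
    foldr_toEnd_mul_apply_mem_lowerCentralSeries (R := ℝ) (fun i => (⟨X i, hX i⟩ : u)) v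
  rw [hbot, LieSubmodule.mem_bot] at hmem
  exact hmem
end

section
/- For every U ∈ V with B(U,U) = 0 and B(U,e) = 1, there exists a unipotent isometry g of (V,B) with g(e) = e and g(f) = U. -/
/-!
The isometry is an Eichler (Siegel) transformation `g = 1 + N`, where
`N v = B(v,e) w - (B(v,w) + c B(v,e)) e` with `w = U - f` and `c = -B(f,U)`, so that
`2c = B(w,w)`. As `e` is isotropic and orthogonal to `w`, `N` sends `w` into `span {e}` and kills
`e`, so `N³ = 0`; `2c = B(w,w)` is exactly what makes `1 + N` an isometry, and `N f = w`.
-/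

theorem HasSignature.isSymm {V : Type*} [AddCommGroup V] [Module ℝ V]
    {B : V →ₗ[ℝ] V →ₗ[ℝ] ℝ} {p q : ℕ} (hsig : HasSignature V B p q) : B.IsSymm := by
  obtain ⟨b, hb⟩ := hsig
  refine LinearMap.isSymm_iff_eq_flip.mpr (b.ext fun i ↦ b.ext fun j ↦ ?_)
  rw [LinearMap.flip_apply, hb i j, hb j i]
  by_cases h : i = j
  · subst h; rfl
  · simp [h, Ne.symm h]

namespace LinearMap

variable {R M : Type*} [CommRing R] [AddCommGroup M] [Module R M]

def eichlerNilpotent (B : M →ₗ[R] M →ₗ[R] R) (e w : M) (c : R) : Module.End R M :=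
  (B.flip e).smulRight w - (B.flip w + c • B.flip e).smulRight e

variable {B : M →ₗ[R] M →ₗ[R] R} {e w : M} {c : R}

@[simp]
theorem eichlerNilpotent_apply (v : M) :
    B.eichlerNilpotent e w c v = B v e • w - (B v w + c * B v e) • e := by
  simp [eichlerNilpotent]

theorem eichlerNilpotent_apply_left (he : B e e = 0) (hew : B e w = 0) :
    B.eichlerNilpotent e w c e = 0 := by
  simp [he, hew]

theorem eichlerNilpotent_apply_right (hwe : B w e = 0) :
    B.eichlerNilpotent e w c w = -B w w • e := by
  simp [hwe, neg_smul]

theorem eichlerNilpotent_pow_three (he : B e e = 0) (hew : B e w = 0) (hwe : B w e = 0) :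
    B.eichlerNilpotent e w c ^ 3 = 0 := by
  ext v
  simp only [pow_succ, pow_zero, one_mul, Module.End.mul_apply, zero_apply]
  rw [eichlerNilpotent_apply v, map_sub, map_smul, map_smul, eichlerNilpotent_apply_right hwe,
    eichlerNilpotent_apply_left he hew, smul_zero, sub_zero, smul_smul, map_smul,
    eichlerNilpotent_apply_left he hew, smul_zero]

theorem isNilpotent_eichlerNilpotent (he : B e e = 0) (hew : B e w = 0) (hwe : B w e = 0) :
    IsNilpotent (B.eichlerNilpotent e w c) :=
  ⟨3, eichlerNilpotent_pow_three he hew hwe⟩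

theorem one_add_eichlerNilpotent_isometry (hB : B.IsSymm) (he : B e e = 0) (hew : B e w = 0)
    (hc : 2 * c = B w w) (u v : M) :
    B ((1 + B.eichlerNilpotent e w c) u) ((1 + B.eichlerNilpotent e w c) v) = B u v := by
  have hsymm (x y : M) : B x y = B y x := hB.eq x y
  simp only [add_apply, Module.End.one_apply, eichlerNilpotent_apply, map_add, map_sub, map_smul,
    sub_apply, smul_apply, smul_eq_mul, he, hew, hsymm w e, hsymm e v, hsymm w v]
  linear_combination -(B u e * B v e) * hc

end LinearMap

theorem exists_unipotent_isometry_moving_f_general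
    (V : Type*) [AddCommGroup V] [Module ℝ V]
    (p q : ℕ)
    (B : V →ₗ[ℝ] V →ₗ[ℝ] ℝ) (hsig : HasSignature V B p q)
    (e f : V) (he : B e e = 0) (hf : B f f = 0) (hef : B e f = 1)
    (U : V) (hU : B U U = 0) (hUe : B U e = 1) :
    ∃ g : V ≃ₗ[ℝ] V,
      (∀ u v : V, B (g u) (g v) = B u v) ∧
      IsNilpotent ((g : V →ₗ[ℝ] V) - LinearMap.id) ∧
      g e = e ∧ g f = U := by
  have hB := hsig.isSymm
  have hsymm (x y : V) : B x y = B y x := hB.eq x y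
  have hfe : B f e = 1 := hsymm e f ▸ hef
  have hwe : B (U - f) e = 0 := by simp [hUe, hfe]
  have hew : B e (U - f) = 0 := hsymm _ e ▸ hwe
  have hc : 2 * -B f U = B (U - f) (U - f) := by
    simp only [map_sub, LinearMap.sub_apply, hU, hf, hsymm U f]; ring
  set N := B.eichlerNilpotent e (U - f) (-B f U)
  have hN : IsNilpotent N := LinearMap.isNilpotent_eichlerNilpotent he hew hwe
  set g := LinearMap.GeneralLinearGroup.toLinearEquiv hN.isUnit_one_add.unit
  have hg : (g : Module.End ℝ V) = 1 + N := rfl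
  refine ⟨g, fun u v ↦ ?_, ?_, ?_, ?_⟩
  · rw [← LinearEquiv.coe_coe, hg]
    exact LinearMap.one_add_eichlerNilpotent_isometry hB he hew hc u v
  · rwa [hg, ← Module.End.one_eq_id, add_sub_cancel_left]
  · rw [← LinearEquiv.coe_coe, hg, LinearMap.add_apply, Module.End.one_apply,
      LinearMap.eichlerNilpotent_apply_left he hew, add_zero]
  · have hNf : N f = U - f := by simp [N, hfe, hf]
    rw [← LinearEquiv.coe_coe, hg, LinearMap.add_apply, Module.End.one_apply, hNf, add_sub_cancel]

/-- Let `(V,B)` be of signature `(p,q)` with `1 ≤ p ≤ q` and `p+q ≥ 3`, and let `e, f` be null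
vectors with `B(e,f) = 1`.  For every null vector `U` with `B(U,e) = 1` there is a unipotent
isometry `g` of `(V,B)` with `g e = e` and `g f = U`. -/
theorem exists_unipotent_isometry_moving_f
    (V : Type*) [AddCommGroup V] [Module ℝ V] [FiniteDimensional ℝ V]
    (p q : ℕ) (hp : 1 ≤ p) (hpq : p ≤ q) (hn : 3 ≤ p+q)
    (B : V →ₗ[ℝ] V →ₗ[ℝ] ℝ) (hsig : HasSignature V B p q)
    (e f : V) (he : B e e = 0) (hf : B f f = 0) (hef : B e f = 1)
    (U : V) (hU : B U U = 0) (hUe : B U e = 1) :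
    ∃ g : V ≃ₗ[ℝ] V,
      (∀ u v : V, B (g u) (g v) = B u v) ∧
      IsNilpotent ((g : V →ₗ[ℝ] V) - LinearMap.id) ∧
      g e = e ∧ g f = U :=
  exists_unipotent_isometry_moving_f_general V p q B hsig e f he hf hef U hU hUe
end

section
/- For all s, t ∈ ℝ with 1 + st ≠ 0, setting c = t/(1+st), one has the identity of (n+2)×(n+2) real matrices (I − c·U_n)(I + s·T)(I + t·U_n) = D + s·T, where D is the diagonal matrix diag(1+st, 1+st, 1, …, 1, (1+st)^{-1}, (1+st)^{-1}). -/
/-!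
`U` squares to zero and `U T U = U`, so the triple product expands to
`1 + sT + st·TU − cs·UT`. Here `TU = E₀₀ + E₁₁` and `UT = Eₙₙ + Eₙ₊₁,ₙ₊₁` are the
diagonal projections onto the two null planes, and `cs = 1 − (1+st)⁻¹`, which gives `D + sT`.
-/

open Matrix

/-- The null translation `T`: `T_{0,n} = 1`, `T_{1,n+1} = −1`, all other entries 0
(here `n = p+q`). -/
noncomputable def Tmat (p q : ℕ) : Matrix (Fin (p+q+2)) (Fin (p+q+2)) ℝ :=
  Matrix.single 0 ⟨p+q, by omega⟩ 1 - Matrix.single 1 (Fin.last (p+q+1)) 1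

/-- The matrix `U_n = E_{n,0} − E_{n+1,1}` (here `n = p+q`). -/
noncomputable def Un (p q : ℕ) : Matrix (Fin (p+q+2)) (Fin (p+q+2)) ℝ :=
  Matrix.single ⟨p+q, by omega⟩ 0 1 - Matrix.single (Fin.last (p+q+1)) 1 1

/-- The diagonal matrix `diag(1+st, 1+st, 1, …, 1, (1+st)⁻¹, (1+st)⁻¹)`. -/
noncomputable def Dmat (p q : ℕ) (s t : ℝ) : Matrix (Fin (p+q+2)) (Fin (p+q+2)) ℝ :=
  Matrix.diagonal (fun i => if (i:ℕ) ≤ 1 then 1 + s*t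
    else if p+q ≤ (i:ℕ) then (1 + s*t)⁻¹ else 1)

section Expansion

variable {R A : Type*} [CommRing R] [Ring A] [Algebra R A]

theorem one_sub_smul_mul_one_add_smul_mul_one_add_smul {X Y : A} {s t c : R}
    (hYY : Y * Y = 0) (hYXY : Y * (X * Y) = Y) (hc : c * (1 + s * t) = t) :
    (1 - c • Y) * (1 + s • X) * (1 + t • Y)
      = 1 + s • X + (s * t) • (X * Y) - (c * s) • (Y * X) := by
  have hXY : (1 + s • X) * (1 + t • Y) = 1 + s • X + t • Y + (s * t) • (X * Y) := by
    simp only [mul_add, add_mul, mul_one, one_mul, smul_mul_smul_comm]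
    abel
  have hYXY' : Y * ((1 + s • X) * (1 + t • Y)) = (1 + s * t) • Y + s • (Y * X) := by
    rw [hXY]
    simp only [mul_add, mul_one, mul_smul_comm, hYY, hYXY, smul_zero, add_smul, one_smul]
    abel
  rw [mul_assoc, sub_mul, one_mul, smul_mul_assoc, hYXY', hXY, smul_add, smul_smul, smul_smul, hc]
  abel

end Expansion

section NullPair

variable {N R : Type*} [Fintype N] [DecidableEq N] [CommRing R] {i j k l : N}

theorem single_sub_single_mul_single_sub_single_swap (hkl : k ≠ l) :
    (single i k (1 : R) - single j l 1) * (single k i 1 - single l j 1)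
      = single i i 1 + single j j 1 := by
  simp [sub_mul, mul_sub, hkl, hkl.symm]

theorem single_sub_single_mul_self_eq_zero (hik : i ≠ k) (hil : i ≠ l) (hjk : j ≠ k)
    (hjl : j ≠ l) : (single k i (1 : R) - single l j 1) * (single k i 1 - single l j 1) = 0 := by
  simp [sub_mul, mul_sub, hik, hil, hjk, hjl]

theorem single_sub_single_mul_single_add_single (hij : i ≠ j) :
    (single k i (1 : R) - single l j 1) * (single i i 1 + single j j 1)
      = single k i 1 - single l j 1 := by
  simp [sub_mul, mul_add, hij, hij.symm, ← sub_eq_add_neg]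

end NullPair

theorem Dmat_eq_one_add_smul_sub_smul (p q : ℕ) (hn : 2 ≤ p + q) (s t : ℝ)
    (hst : 1 + s * t ≠ 0) :
    Dmat p q s t = 1 + (s * t) • (single 0 0 1 + single 1 1 1)
      - (t / (1 + s * t) * s) • (single ⟨p+q, by omega⟩ ⟨p+q, by omega⟩ 1
          + single (Fin.last (p+q+1)) (Fin.last (p+q+1)) 1) := by
  ext ⟨i, hi⟩ ⟨j, hj⟩
  simp [Dmat, diagonal_apply, single_apply, one_apply, Fin.ext_iff]
  split_ifs <;> first | omega | (field_simp; ring)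

theorem holonomy_matrix_identity_general (p q : ℕ) (hn : 3 ≤ p+q)
    (s t : ℝ) (hst : 1 + s*t ≠ 0) :
    (1 - (t/(1+s*t)) • Un p q) * (1 + s • Tmat p q) * (1 + t • Un p q)
      = Dmat p q s t + s • Tmat p q := by
  have h01 : (0 : Fin (p+q+2)) ≠ 1 := Fin.ne_of_val_ne (by simp)
  have h0n : (0 : Fin (p+q+2)) ≠ ⟨p+q, by omega⟩ := Fin.ne_of_val_ne (by simp; omega)
  have h0l : (0 : Fin (p+q+2)) ≠ Fin.last (p+q+1) := Fin.ne_of_val_ne (by simp)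
  have h1n : (1 : Fin (p+q+2)) ≠ ⟨p+q, by omega⟩ := Fin.ne_of_val_ne (by simp; omega)
  have h1l : (1 : Fin (p+q+2)) ≠ Fin.last (p+q+1) := Fin.ne_of_val_ne (by simp; omega)
  have hnl : (⟨p+q, by omega⟩ : Fin (p+q+2)) ≠ Fin.last (p+q+1) :=
    Fin.ne_of_val_ne (by simp)
  have hTU : Tmat p q * Un p q = single 0 0 1 + single 1 1 1 :=
    single_sub_single_mul_single_sub_single_swap hnl
  have hUT : Un p q * Tmat p q
      = single ⟨p+q, by omega⟩ ⟨p+q, by omega⟩ 1 + single (Fin.last _) (Fin.last _) 1 :=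
    single_sub_single_mul_single_sub_single_swap h01
  have hUU : Un p q * Un p q = 0 := single_sub_single_mul_self_eq_zero h0n h0l h1n h1l
  have hUTU : Un p q * (Tmat p q * Un p q) = Un p q := by
    rw [hTU]
    exact single_sub_single_mul_single_add_single h01
  rw [one_sub_smul_mul_one_add_smul_mul_one_add_smul hUU hUTU (div_mul_cancel₀ t hst), hTU, hUT,
    Dmat_eq_one_add_smul_sub_smul p q (by omega) s t hst]
  abel

/-- For `1 ≤ p ≤ q`, `n = p+q ≥ 3`, and all `s, t ∈ ℝ` with `1 + st ≠ 0`, setting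
`c = t/(1+st)`, one has `(I − c·Uₙ)(I + s·T)(I + t·Uₙ) = D + s·T`. -/
theorem holonomy_matrix_identity (p q : ℕ) (hp : 1 ≤ p) (hpq : p ≤ q) (hn : 3 ≤ p+q)
    (s t : ℝ) (hst : 1 + s*t ≠ 0) :
    (1 - (t/(1+s*t)) • Un p q) * (1 + s • Tmat p q) * (1 + t • Un p q)
      = Dmat p q s t + s • Tmat p q :=
  holonomy_matrix_identity_general p q hn s t hst
end

section
/- Let p ≥ 1 and let 𝔫 ⊆ 𝔬(p+1,q+1) be a nilpotent Lie subalgebra such that every X ∈ 𝔫 satisfies X e_0 ∈ ℝ e_0 and X e_1 ∈ ℝ e_1 (i.e. 𝔫 fixes the two points [e_0] and [e_1] of the lightlike geodesic Λ = P(span{e_0, e_1})). Then the nilpotence degree of 𝔫 is at most 2p; that is, 𝔫_{2p} = 0. -/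
open Matrix

attribute [local instance 100] LieRing.ofAssociativeRing

/-- The Gram matrix of `Q^{p+1,q+1}` on `ℝ^{n+2}`, `n = p+q`. -/
noncomputable def JBig (p q : ℕ) : Matrix (Fin (p+q+2)) (Fin (p+q+2)) ℝ :=
  fun i j => if ((i:ℕ) + (j:ℕ) = p+q+1 ∧ ((i:ℕ) ≤ p ∨ q+1 ≤ (i:ℕ)))
      ∨ (i = j ∧ p+1 ≤ (i:ℕ) ∧ (i:ℕ) ≤ q) then 1 else 0

/-!
`ℂ ⊗ 𝔫` is a nilpotent complex Lie algebra acting on `ℂ^{n+2}`, so `ℂ^{n+2}` is the sum of the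
generalized weight spaces `V_χ`. On `V_χ` the shifted operators `X - χ(1 ⊗ X)`, `X ∈ 𝔫`,
generate a decreasing filtration `F_j = F_j(V_χ)` (the lower central series of the shifted weight
space), and an element of `𝔫_k` moves `F_0` into `F_{k+1}`. So it suffices to show `F_{2p+1} = 0`.

This uses the Hermitian extension `H` of `Q^{p+1,q+1}`: its totally isotropic subspaces have
dimension `≤ p + 1`, and the shifted operators are skew for `H` up to the scalar `χ + χ̄`. Since
`e₀` and `e₁` are eigenvectors, `P = span(e₀, e₁)` is an invariant `H`-isotropic plane and
`F_1 ⊥ P`. With `G_j = F_j(V_χ ∩ P^⊥)`, the chain `G_j + P` strictly decreases until `G_m ⊆ P`, and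
it is totally isotropic for `2j ≥ m`; hence `2 + ⌊m/2⌋ ≤ p + 1`. Finally `F_{m+1} ⊆ G_m ⊆ V_χ ∩ P`,
on which the shifted operators, being both diagonal and nilpotent, vanish. So `F_{m+2} = 0`, and
`m + 2 ≤ 2p + 1`.
-/

open scoped TensorProduct

namespace Submodule

variable {ι R M : Type*} [Semiring R] [AddCommMonoid M] [Module R M]

def iSupMap (f : ι → M →ₗ[R] M) (W : Submodule R M) : Submodule R M :=
  ⨆ i, W.map (f i)

variable {f : ι → M →ₗ[R] M} {W W' E : Submodule R M}

theorem iSupMap_le_iff : iSupMap f W ≤ W' ↔ ∀ i, ∀ v ∈ W, f i v ∈ W' := by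
  simp only [iSupMap, iSup_le_iff, map_le_iff_le_comap]
  rfl

theorem apply_mem_iSupMap (i : ι) {v : M} (hv : v ∈ W) : f i v ∈ iSupMap f W :=
  iSupMap_le_iff.mp le_rfl i v hv

theorem iSupMap_mono : Monotone (iSupMap f) := fun _ _ h ↦
  iSupMap_le_iff.mpr fun i _ hv ↦ apply_mem_iSupMap i (h hv)

theorem iSupMap_sup : iSupMap f (W ⊔ W') = iSupMap f W ⊔ iSupMap f W' := by
  simp only [iSupMap, map_sup, iSup_sup_eq]

theorem pow_apply_mem_iterate_iSupMap (i : ι) {v : M} (hv : v ∈ W) (k : ℕ) :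
    (f i ^ k) v ∈ (iSupMap f)^[k] W := by
  induction k with
  | zero => simpa
  | succ k ih =>
    rw [pow_succ', Module.End.mul_apply, Function.iterate_succ_apply']
    exact apply_mem_iSupMap i ih

theorem pow_apply_eq_zero_of_iterate_iSupMap_eq_bot {K : ℕ} (hK : (iSupMap f)^[K] W = ⊥)
    (i : ι) {v : M} (hv : v ∈ W) : (f i ^ K) v = 0 := by
  simpa [hK] using pow_apply_mem_iterate_iSupMap (f := f) i hv K

/-- Once `(iSupMap f)^[j] W ⊔ E` stops decreasing it is stuck (as `iSupMap f E ≤ E`), so it must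
already have reached its final value `E`. -/
theorem exists_iterate_iSupMap_le (hW : iSupMap f W ≤ W) {K : ℕ} (hK : (iSupMap f)^[K] W = ⊥)
    (hE : iSupMap f E ≤ E) :
    ∃ m, (iSupMap f)^[m] W ≤ E ∧
      ∀ j < m, (iSupMap f)^[j + 1] W ⊔ E < (iSupMap f)^[j] W ⊔ E := by
  classical
  set C := fun j ↦ (iSupMap f)^[j] W ⊔ E
  have C_succ (j : ℕ) : C (j + 1) = iSupMap f (C j) ⊔ E := by
    simp only [C, Function.iterate_succ_apply', iSupMap_sup, sup_assoc, sup_eq_right.mpr hE]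
  have C_eq_of_le {j : ℕ} (hj : K ≤ j) : C j = E := by
    have : (iSupMap f)^[j] W ≤ (iSupMap f)^[K] W := iSupMap_mono.antitone_iterate_of_map_le hW hj
    simp [C, le_bot_iff.mp (hK ▸ this)]
  have hstable : ∃ j, C (j + 1) = C j := ⟨K, by rw [C_eq_of_le le_rfl, C_eq_of_le (by omega)]⟩
  refine ⟨Nat.find hstable, ?_, fun j hj ↦ lt_of_le_of_ne ?_ (Nat.find_min hstable hj)⟩
  · have C_add (k : ℕ) : C (Nat.find hstable + k) = C (Nat.find hstable) := by
      induction k with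
      | zero => rfl
      | succ k ih => rw [← add_assoc, C_succ, ih, ← C_succ, Nat.find_spec hstable]
    exact le_sup_left.trans ((C_add K).symm.trans (C_eq_of_le (Nat.le_add_left K _))).le
  · exact sup_le_sup_right (iSupMap_mono.antitone_iterate_of_map_le hW (Nat.le_succ j)) E

end Submodule

section LinearAlgebra

variable {K M : Type*} [Field K] [AddCommGroup M] [Module K M]

theorem LinearMap.eq_zero_of_pow_apply_eq_zero {σ : K →+* K} (B : M →ₗ[K] M →ₛₗ[σ] K)
    {T : Module.End K M} {κ : K} (hκ : κ ≠ 0) (hT : ∀ u v, B (T u) v + B u (T v) = κ * B u v)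
    {a b : ℕ} {u v : M} (hu : (T ^ a) u = 0) (hv : (T ^ b) v = 0) : B u v = 0 := by
  induction a generalizing b u v with
  | zero => simp_all
  | succ a iha =>
    induction b generalizing v with
    | zero => simp_all
    | succ b ihb =>
      have h₁ : B (T u) v = 0 := iha (by rwa [← Module.End.mul_apply, ← pow_succ]) hv
      have h₂ : B u (T v) = 0 := ihb (by rwa [← Module.End.mul_apply, ← pow_succ])
      have := hT u v
      rw [h₁, h₂, add_zero] at this
      exact (mul_eq_zero.mp this.symm).resolve_left hκ

theorem Module.End.apply_eq_zero_of_pow_apply_eq_zero {f : Module.End K M} {x y : M} {a b : K}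
    (hx : f x = a • x) (hy : f y = b • y) (hxy : LinearIndependent K ![x, y]) {s t : K} {k : ℕ}
    (h : (f ^ k) (s • x + t • y) = 0) : f (s • x + t • y) = 0 := by
  have pow_apply (n : ℕ) : (f ^ n) (s • x + t • y) = (s * a ^ n) • x + (t * b ^ n) • y := by
    induction n with
    | zero => simp
    | succ n ih =>
      rw [pow_succ', Module.End.mul_apply, ih, map_add, map_smul, map_smul, hx, hy]
      module
  have mul_eq_zero_of_mul_pow {c d : K} (h : c * d ^ k = 0) : c * d = 0 := by
    rcases mul_eq_zero.mp h with h | h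
    · rw [h, zero_mul]
    · rw [eq_zero_of_pow_eq_zero h, mul_zero]
  obtain ⟨hs, ht⟩ := LinearIndependent.pair_iff.mp hxy _ _ ((pow_apply k).symm.trans h)
  rw [← pow_one f, pow_apply, pow_one, pow_one, mul_eq_zero_of_mul_pow hs,
    mul_eq_zero_of_mul_pow ht, zero_smul, zero_smul, add_zero]

theorem Submodule.finrank_add_le_finrank_of_lt [FiniteDimensional K M] {C : ℕ → Submodule K M}
    {m : ℕ} (hC : ∀ j < m, C (j + 1) < C j) {j : ℕ} (hj : j ≤ m) :
    Module.finrank K (C m) + (m - j) ≤ Module.finrank K (C j) := by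
  suffices ∀ d, j + d ≤ m → Module.finrank K (C (j + d)) + d ≤ Module.finrank K (C j) by
    have := this (m - j) (by omega)
    rwa [Nat.add_sub_cancel' hj] at this
  intro d hd
  induction d with
  | zero => simp
  | succ d ih =>
    have := Submodule.finrank_lt_finrank_of_lt (hC (j + d) (by omega))
    have := ih (by omega)
    show Module.finrank K (C (j + d + 1)) + (d + 1) ≤ _
    omega

theorem Submodule.sup_le_orthogonalBilin_sup {σ : K →+* K} {B : M →ₗ[K] M →ₛₗ[σ] K}
    (hB : B.IsRefl) {S T : Submodule K M} (hS : S ≤ S.orthogonalBilin B)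
    (hT : T ≤ T.orthogonalBilin B) (hST : S ≤ T.orthogonalBilin B) :
    S ⊔ T ≤ (S ⊔ T).orthogonalBilin B := by
  have hTS := (le_orthogonalBilin_orthogonalBilin hB).trans (orthogonalBilin_le hST)
  rintro y hy x hx
  obtain ⟨s, hs, t, ht, rfl⟩ := mem_sup.mp hx
  obtain ⟨s', hs', t', ht', rfl⟩ := mem_sup.mp hy
  simp [hS hs' s hs, hT ht' t ht, hST hs' t ht, hTS ht' s hs]

end LinearAlgebra

namespace LieModule

section LowerCentralSeries

variable {R L M : Type*} [CommRing R] [LieRing L] [LieAlgebra R L]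
  [AddCommGroup M] [Module R M] [LieRingModule L M] [LieModule R L M]

theorem lie_lowerCentralSeries_le (k j : ℕ) :
    ⁅lowerCentralSeries R L L k, lowerCentralSeries R L M j⁆ ≤
      lowerCentralSeries R L M (j + k + 1) := by
  induction k generalizing j with
  | zero => exact (LieSubmodule.mono_lie_left _ le_top).trans (lowerCentralSeries_succ R L M j).ge
  | succ k ih =>
    rw [LieSubmodule.lie_le_iff]
    intro x hx m hm
    rw [lowerCentralSeries_succ, ← LieSubmodule.mem_toSubmodule,
      LieSubmodule.lieIdeal_oper_eq_linear_span'] at hx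
    induction hx using Submodule.span_induction with
    | mem x hx =>
      obtain ⟨y, -, z, hz, rfl⟩ := hx
      have hym : ⁅y, m⁆ ∈ lowerCentralSeries R L M (j + 1) := by
        rw [lowerCentralSeries_succ]
        exact LieSubmodule.lie_mem_lie (LieSubmodule.mem_top y) hm
      rw [lie_lie]
      refine sub_mem ?_ ?_
      · have := LieSubmodule.lie_mem_lie (LieSubmodule.mem_top y)
          (ih j (LieSubmodule.lie_mem_lie hz hm))
        rwa [← lowerCentralSeries_succ, show j + k + 1 + 1 = j + (k + 1) + 1 by ring] at this
      · have := ih (j + 1) (LieSubmodule.lie_mem_lie hz hym)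
        rwa [show j + 1 + k + 1 = j + (k + 1) + 1 by ring] at this
    | zero => simp
    | add x y _ _ hx hy => rw [add_lie]; exact add_mem hx hy
    | smul t x _ hx => rw [smul_lie]; exact SMulMemClass.smul_mem t hx

theorem Weight.apply_eq_zero_of_mem_lowerCentralSeries [LieRing.IsNilpotent L]
    [LinearWeights R L M] (χ : Weight R L M) {k : ℕ} (hk : k ≠ 0) {x : L}
    (hx : x ∈ lowerCentralSeries R L L k) : χ x = 0 := by
  replace hx : x ∈ (lowerCentralSeries R L L 1).toSubmodule :=
    antitone_lowerCentralSeries R L L (Nat.one_le_iff_ne_zero.mpr hk) hx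
  rw [lowerCentralSeries_succ, lowerCentralSeries_zero,
    LieSubmodule.lieIdeal_oper_eq_linear_span'] at hx
  refine (Submodule.span_le (p := LinearMap.ker (χ : L →ₗ[R] R)).mpr ?_) hx
  rintro - ⟨y, -, z, -, rfl⟩
  exact χ.apply_lie y z

end LowerCentralSeries

section ShiftedWeightSpace

open Submodule

variable {K L M : Type*} [Field K] [LieRing L] [LieAlgebra K L] [LieRing.IsNilpotent L]
  [AddCommGroup M] [Module K M] [LieRingModule L M] [LieModule K L M]
  {ι : Type*} {g : ι → L} {T : ι → Module.End K M}

theorem iSupMap_genWeightSpace_le (χ : L → K)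
    (hT : ∀ i, T i = toEnd K L M (g i) - χ (g i) • 1) :
    iSupMap T (genWeightSpace M χ) ≤ genWeightSpace M χ := by
  rw [iSupMap_le_iff]
  intro i v hv
  rw [hT]
  exact sub_mem ((genWeightSpace M χ).lie_mem hv) (smul_mem _ _ hv)

variable [LinearWeights K L M]

theorem map_lowerCentralSeries_shiftedGenWeightSpace (hg : span K (Set.range g) = ⊤)
    (χ : Weight K L M) (hT : ∀ i, T i = toEnd K L M (g i) - χ (g i) • 1) (j : ℕ) :
    (lowerCentralSeries K L (shiftedGenWeightSpace K L M χ) j).toSubmodule.map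
        ((genWeightSpace M χ : Submodule K M).subtype ∘ₗ
          (shiftedGenWeightSpace.shift K L M χ).symm.toLinearMap) =
      (iSupMap T)^[j] (genWeightSpace M χ) := by
  set ι' := (genWeightSpace M χ : Submodule K M).subtype ∘ₗ
    (shiftedGenWeightSpace.shift K L M χ).symm.toLinearMap
  have coe_lie (i : ι) (n : shiftedGenWeightSpace K L M χ) : ι' ⁅g i, n⁆ = T i (ι' n) := by
    rw [hT]
    exact shiftedGenWeightSpace.coe_lie_shiftedGenWeightSpace_apply ..
  induction j with
  | zero => ext v; simp [ι']
  | succ j ih =>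
    rw [Function.iterate_succ_apply', ← ih, lowerCentralSeries_succ,
      LieSubmodule.lieIdeal_oper_eq_linear_span', map_span]
    apply le_antisymm
    · rw [span_le]
      rintro - ⟨-, ⟨x, -, n, hn, rfl⟩, rfl⟩
      rw [SetLike.mem_coe]
      have hx : x ∈ span K (Set.range g) := hg ▸ mem_top
      induction hx using span_induction with
      | mem _ hx =>
        obtain ⟨i, rfl⟩ := hx
        exact (coe_lie i n) ▸ apply_mem_iSupMap i (mem_map_of_mem hn)
      | zero => simp
      | add x y _ _ hx hy => simpa only [add_lie, map_add] using add_mem hx hy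
      | smul t x _ hx => simpa only [smul_lie, map_smul] using smul_mem _ t hx
    · rw [iSupMap_le_iff]
      rintro i - ⟨n, hn, rfl⟩
      exact (coe_lie i n) ▸ subset_span ⟨_, ⟨g i, mem_top, n, hn, rfl⟩, rfl⟩

theorem lowerCentralSeries_shiftedGenWeightSpace_eq_bot_iff (hg : span K (Set.range g) = ⊤)
    (χ : Weight K L M) (hT : ∀ i, T i = toEnd K L M (g i) - χ (g i) • 1) (j : ℕ) :
    lowerCentralSeries K L (shiftedGenWeightSpace K L M χ) j = ⊥ ↔
      (iSupMap T)^[j] (genWeightSpace M χ) = ⊥ := by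
  rw [← map_lowerCentralSeries_shiftedGenWeightSpace hg χ hT, ← LieSubmodule.toSubmodule_eq_bot]
  exact ((map_injective_of_injective fun _ _ h ↦ Subtype.ext h).eq_iff' (map_bot _)).symm

end ShiftedWeightSpace

variable {K L M : Type*} [Field K] [CharZero K] [LieRing L] [LieAlgebra K L]
  [LieRing.IsNilpotent L] [AddCommGroup M] [Module K M] [FiniteDimensional K M]
  [LieRingModule L M] [LieModule K L M] [IsTriangularizable K L M]

theorem toEnd_eq_zero_of_mem_lowerCentralSeries {k : ℕ} (hk : k ≠ 0)
    (h : ∀ χ : Weight K L M, lowerCentralSeries K L (shiftedGenWeightSpace K L M χ) (k + 1) = ⊥)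
    {w : L} (hw : w ∈ lowerCentralSeries K L L k) : toEnd K L M w = 0 := by
  ext m
  have hm : m ∈ ⨆ χ : Weight K L M, genWeightSpace M χ := by
    rw [iSup_genWeightSpace_eq_top']
    trivial
  induction hm using LieSubmodule.iSup_induction' with
  | mem χ m hm =>
    let n : shiftedGenWeightSpace K L M χ := ⟨m, hm⟩
    have hn : ⁅w, n⁆ = 0 := by
      rw [← LieSubmodule.mem_bot (R := K) (L := L), ← h χ, ← zero_add k]
      exact lie_lowerCentralSeries_le k 0 (LieSubmodule.lie_mem_lie hw (LieSubmodule.mem_top n))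
    have := congrArg Subtype.val hn
    rw [shiftedGenWeightSpace.coe_lie_shiftedGenWeightSpace_apply,
      χ.apply_eq_zero_of_mem_lowerCentralSeries hk hw, zero_smul, sub_zero] at this
    simpa using this
  | zero => simp
  | add m₁ m₂ _ _ h₁ h₂ => simp_all

end LieModule

section BaseChange

variable {R A L L' : Type*} [CommRing R] [CommRing A] [Algebra R A] [LieRing L] [LieAlgebra R L]
  [LieRing L'] [LieAlgebra A L'] [LieAlgebra R L'] [IsScalarTower R A L']

def LieHom.liftBaseChange (f : L →ₗ⁅R⁆ L') : A ⊗[R] L →ₗ⁅A⁆ L' where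
  __ := (f : L →ₗ[R] L').liftBaseChange A
  map_lie' {x y} := by
    simp only [AddHom.toFun_eq_coe, LinearMap.coe_toAddHom]
    induction x using TensorProduct.induction_on with
    | zero => simp
    | tmul a x =>
      induction y using TensorProduct.induction_on with
      | zero => simp
      | tmul b y => simp [LieAlgebra.ExtendScalars.bracket_tmul, mul_smul, smul_comm a b]
      | add y z hy hz => simp_all [lie_add]
    | add x z hx hz => simp_all [add_lie]

theorem LieHom.liftBaseChange_tmul (f : L →ₗ⁅R⁆ L') (a : A) (x : L) :
    f.liftBaseChange (a ⊗ₜ x) = a • f x :=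
  LinearMap.liftBaseChange_tmul ..

theorem TensorProduct.span_range_one_tmul {M : Type*} [AddCommGroup M] [Module R M] :
    Submodule.span A (Set.range fun x : M ↦ (1 : A) ⊗ₜ[R] x) = ⊤ := by
  rw [← Submodule.baseChange_top, Submodule.baseChange_eq_span, Submodule.map_top]
  rfl

end BaseChange

namespace Matrix

variable {n : Type*} [Fintype n] [DecidableEq n]

noncomputable def complexify : Matrix n n ℝ →ₐ[ℝ] Module.End ℂ (n → ℂ) :=
  ((toLinAlgEquiv' : Matrix n n ℂ ≃ₐ[ℂ] _).toAlgHom.restrictScalars ℝ).comp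
    (Algebra.ofId ℝ ℂ).mapMatrix

theorem complexify_apply (X : Matrix n n ℝ) (v : n → ℂ) :
    complexify X v = X.map (↑) *ᵥ v := rfl

theorem complexify_injective : Function.Injective (complexify (n := n)) := by
  intro X Y h
  ext i j
  simpa [complexify_apply] using congrFun (LinearMap.congr_fun h (Pi.single j 1)) i

theorem complexify_single_of_mulVec_single {X : Matrix n n ℝ} {k : n} {c : ℝ}
    (h : X *ᵥ Pi.single k 1 = c • Pi.single k 1) :
    complexify X (Pi.single k 1) = (c : ℂ) • Pi.single k 1 := by
  ext i
  have := congrFun h i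
  simp only [mulVec_single_one, Pi.smul_apply, smul_eq_mul, col_apply, Pi.single_apply] at this
  by_cases hik : i = k <;> simp_all [complexify_apply]

end Matrix

namespace LieSubalgebra

variable {n : Type*} [Fintype n] [DecidableEq n] (N : LieSubalgebra ℝ (Matrix n n ℝ))

noncomputable def complexRep : ℂ ⊗[ℝ] N →ₗ⁅ℂ⁆ Module.End ℂ (n → ℂ) :=
  (complexify.toLieHom.comp N.incl).liftBaseChange

noncomputable instance : LieRingModule (ℂ ⊗[ℝ] N) (n → ℂ) :=
  LieRingModule.compLieHom _ N.complexRep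

instance : LieModule ℂ (ℂ ⊗[ℝ] N) (n → ℂ) :=
  LieModule.compLieHom _ _

variable {N}

theorem toEnd_one_tmul (x : N) :
    LieModule.toEnd ℂ (ℂ ⊗[ℝ] N) (n → ℂ) (1 ⊗ₜ x) = complexify (x : Matrix n n ℝ) := by
  refine LinearMap.ext fun v ↦ ?_
  show N.complexRep (1 ⊗ₜ x) v = _
  rw [complexRep, LieHom.liftBaseChange_tmul, one_smul]
  rfl

end LieSubalgebra

namespace TwoPointStabilizer

open Submodule Module

section HermitianForm

variable (p q : ℕ)

def mirror (i : Fin (p+q+2)) : Fin (p+q+2) :=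
  ⟨if (i:ℕ) ≤ p ∨ q+1 ≤ (i:ℕ) then p+q+1 - i else i, by split_ifs <;> omega⟩

theorem mirror_mirror (i : Fin (p+q+2)) : mirror p q (mirror p q i) = i := by
  ext
  simp only [mirror]
  split_ifs <;> omega

theorem JBig_apply_eq_ite (i j : Fin (p+q+2)) :
    JBig p q i j = if j = mirror p q i then 1 else 0 := by
  unfold JBig mirror
  simp only [Fin.ext_iff]
  split_ifs <;> first | rfl | omega

theorem JBig_map_mulVec (v : Fin (p+q+2) → ℂ) : (JBig p q).map (↑) *ᵥ v = v ∘ mirror p q := by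
  ext i
  simp [mulVec, dotProduct, JBig_apply_eq_ite, apply_ite, ite_mul]

noncomputable def hermForm : (Fin (p+q+2) → ℂ) →ₗ[ℂ] (Fin (p+q+2) → ℂ) →ₗ⋆[ℂ] ℂ :=
  LinearMap.mk₂'ₛₗ (RingHom.id ℂ) (starRingEnd ℂ) (fun u v ↦ u ⬝ᵥ ((JBig p q).map (↑) *ᵥ star v))
    (fun _ _ _ ↦ add_dotProduct _ _ _) (fun _ _ _ ↦ smul_dotProduct _ _ _)
    (fun _ _ _ ↦ by rw [star_add, mulVec_add, dotProduct_add])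
    (fun _ _ _ ↦ by rw [star_smul, mulVec_smul, dotProduct_smul]; rfl)

noncomputable def lightlikePlane : Submodule ℂ (Fin (p+q+2) → ℂ) :=
  span ℂ {Pi.single 0 1, Pi.single 1 1}

noncomputable def lightlikePerp : Submodule ℂ (Fin (p+q+2) → ℂ) :=
  (lightlikePlane p q).orthogonalBilin (hermForm p q)

variable {p q}

theorem hermForm_apply (u v : Fin (p+q+2) → ℂ) :
    hermForm p q u v = u ⬝ᵥ ((JBig p q).map (↑) *ᵥ star v) := rfl

theorem hermForm_apply_eq_sum (u v : Fin (p+q+2) → ℂ) :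
    hermForm p q u v = ∑ i, u i * star (v (mirror p q i)) := by
  simp [hermForm_apply, JBig_map_mulVec, dotProduct]

theorem star_hermForm (u v : Fin (p+q+2) → ℂ) : star (hermForm p q u v) = hermForm p q v u := by
  rw [hermForm_apply_eq_sum, hermForm_apply_eq_sum, star_sum,
    ← (Function.Involutive.bijective (mirror_mirror p q)).sum_comp]
  simp [mirror_mirror, mul_comm]

theorem hermForm_isRefl : (hermForm p q).IsRefl := fun u v h ↦ by
  rw [← star_hermForm, h, star_zero]

theorem hermForm_single (i j : Fin (p+q+2)) :
    hermForm p q (Pi.single i 1) (Pi.single j 1) = JBig p q i j := by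
  simp [hermForm_apply]

theorem hermForm_complexify {X : Matrix (Fin (p+q+2)) (Fin (p+q+2)) ℝ}
    (hX : Xᵀ * JBig p q + JBig p q * X = 0) (u v : Fin (p+q+2) → ℂ) :
    hermForm p q (complexify X u) v = - hermForm p q u (complexify X v) := by
  have hXc : (X.map (↑))ᵀ * (JBig p q).map (↑) =
      -((JBig p q).map (↑) * X.map ((↑) : ℝ → ℂ)) := by
    have := congrArg Complex.ofRealHom.mapMatrix hX
    rw [map_add, map_mul, map_mul, map_zero] at this
    rw [eq_neg_iff_add_eq_zero, ← transpose_map]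
    exact this
  have hstar : star (X.map ((↑) : ℝ → ℂ) *ᵥ v) = X.map (↑) *ᵥ star v := by
    ext i
    simp [mulVec, dotProduct, star_sum]
  rw [hermForm_apply, hermForm_apply, complexify_apply, complexify_apply, hstar,
    ← vecMul_transpose, ← dotProduct_mulVec, mulVec_mulVec, hXc, neg_mulVec, ← mulVec_mulVec,
    dotProduct_neg]

theorem finrank_le_of_le_orthogonalBilin (hpq : p ≤ q) {S : Submodule ℂ (Fin (p+q+2) → ℂ)}
    (hS : S ≤ S.orthogonalBilin (hermForm p q)) : finrank ℂ S ≤ p + 1 := by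
  -- vectors constant on the orbits of `mirror` form a positive definite subspace of dimension `q+1`
  let fold (i : Fin (p+q+2)) : Fin (q+1) :=
    ⟨if (i:ℕ) ≤ q then i else p+q+1-i, by split_ifs <;> omega⟩
  have fold_surjective : Function.Surjective fold := fun k ↦
    ⟨⟨k, by omega⟩, by ext; simp only [fold]; split_ifs <;> simp_all; omega⟩
  have fold_mirror (i) : fold (mirror p q i) = fold i := by
    ext
    simp only [fold, mirror]
    split_ifs <;> omega
  let P := LinearMap.range (LinearMap.funLeft ℂ ℂ fold)
  have finrank_P : finrank ℂ P = q + 1 := by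
    rw [LinearMap.finrank_range_of_inj (LinearMap.funLeft_injective_of_surjective _ _ _
      fold_surjective)]
    simp
  have disjoint_S_P : Disjoint S P := by
    rw [disjoint_def]
    rintro - hw ⟨c, rfl⟩
    have hself := hS hw _ hw
    rw [hermForm_apply_eq_sum] at hself
    simp only [LinearMap.funLeft_apply, fold_mirror] at hself
    open scoped ComplexOrder in
    exact dotProduct_self_star_eq_zero.mp hself
  have := finrank_add_finrank_le_of_disjoint disjoint_S_P
  simp only [finrank_P, finrank_fin_fun] at this
  omega

theorem linearIndependent_single_zero_one :
    LinearIndependent ℂ ![(Pi.single 0 1 : Fin (p+q+2) → ℂ), Pi.single 1 1] := by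
  refine LinearIndependent.pair_iff.mpr fun s t h ↦ ⟨?_, ?_⟩
  · simpa using congrFun h 0
  · simpa using congrFun h 1

theorem finrank_lightlikePlane : finrank ℂ (lightlikePlane p q) = 2 := by
  rw [lightlikePlane, ← Matrix.range_cons_cons_empty _ _ ![],
    finrank_span_eq_card linearIndependent_single_zero_one, Fintype.card_fin]

theorem lightlikePlane_le_lightlikePerp (hp : 1 ≤ p) (hpq : p ≤ q) :
    lightlikePlane p q ≤ lightlikePerp p q := by
  intro y hy x hx
  obtain ⟨a, b, rfl⟩ := mem_span_pair.mp hx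
  obtain ⟨c, d, rfl⟩ := mem_span_pair.mp hy
  simp [hermForm_single, JBig, show p ≠ 0 by omega, show p + q ≠ 1 by omega]

end HermitianForm

section ShiftedOperators

variable {p q : ℕ} {ι : Type*}

noncomputable def shiftOp (A : ι → Matrix (Fin (p+q+2)) (Fin (p+q+2)) ℝ) (μ : ι → ℂ) (i : ι) :
    Module.End ℂ (Fin (p+q+2) → ℂ) :=
  complexify (A i) - μ i • 1

structure IsTwoPointStabilizer (A : ι → Matrix (Fin (p+q+2)) (Fin (p+q+2)) ℝ) : Prop where
  skew (i : ι) : (A i)ᵀ * JBig p q + JBig p q * A i = 0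
  eigen_zero (i : ι) : ∃ c : ℂ, complexify (A i) (Pi.single 0 1) = c • Pi.single 0 1
  eigen_one (i : ι) : ∃ c : ℂ, complexify (A i) (Pi.single 1 1) = c • Pi.single 1 1

variable {A : ι → Matrix (Fin (p+q+2)) (Fin (p+q+2)) ℝ} {μ : ι → ℂ}

theorem shiftOp_apply (i : ι) (v : Fin (p+q+2) → ℂ) :
    shiftOp A μ i v = complexify (A i) v - μ i • v := rfl

theorem shiftOp_of_eigen {i : ι} {e : Fin (p+q+2) → ℂ} {c : ℂ} (he : complexify (A i) e = c • e) :
    shiftOp A μ i e = (c - μ i) • e := by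
  rw [shiftOp_apply, he, sub_smul]

theorem hermForm_shiftOp_add {i : ι} (hA : (A i)ᵀ * JBig p q + JBig p q * A i = 0)
    (u v : Fin (p+q+2) → ℂ) :
    hermForm p q (shiftOp A μ i u) v + hermForm p q u (shiftOp A μ i v) =
      -(μ i + star (μ i)) * hermForm p q u v := by
  simp only [shiftOp_apply, map_sub, map_smul, LinearMap.sub_apply, LinearMap.smul_apply,
    LinearMap.map_smulₛₗ, hermForm_complexify hA, smul_eq_mul, Complex.star_def]
  ring

theorem hermForm_shiftOp_of_eigen {i : ι} (hA : (A i)ᵀ * JBig p q + JBig p q * A i = 0)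
    {e : Fin (p+q+2) → ℂ} {c : ℂ} (he : complexify (A i) e = c • e) (v : Fin (p+q+2) → ℂ) :
    hermForm p q e (shiftOp A μ i v) = -(c + star (μ i)) * hermForm p q e v := by
  have := hermForm_shiftOp_add (μ := μ) hA e v
  rw [shiftOp_of_eigen he, map_smul, LinearMap.smul_apply, smul_eq_mul] at this
  linear_combination this

theorem iSupMap_shiftOp_lightlikePlane_le (hA : IsTwoPointStabilizer A) :
    iSupMap (shiftOp A μ) (lightlikePlane p q) ≤ lightlikePlane p q := by
  rw [iSupMap_le_iff]
  intro i v hv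
  obtain ⟨a, b, rfl⟩ := mem_span_pair.mp hv
  obtain ⟨c₀, hc₀⟩ := hA.eigen_zero i
  obtain ⟨c₁, hc₁⟩ := hA.eigen_one i
  rw [map_add, map_smul, map_smul, shiftOp_of_eigen hc₀, shiftOp_of_eigen hc₁, smul_smul,
    smul_smul]
  exact mem_span_pair.mpr ⟨_, _, rfl⟩

variable {U : Submodule ℂ (Fin (p+q+2) → ℂ)}

theorem iSupMap_shiftOp_le_ker_hermForm (hA : ∀ i, (A i)ᵀ * JBig p q + JBig p q * A i = 0)
    {e : Fin (p+q+2) → ℂ} (he : ∀ i, ∃ c : ℂ, complexify (A i) e = c • e) {K : ℕ}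
    (hK : (iSupMap (shiftOp A μ))^[K] U = ⊥) :
    iSupMap (shiftOp A μ) U ≤ LinearMap.ker (hermForm p q e) := by
  choose c hc using he
  rw [iSupMap_le_iff]
  intro i v hv
  rw [LinearMap.mem_ker, hermForm_shiftOp_of_eigen (hA i) (hc i)]
  by_cases hi : c i + star (μ i) = 0
  · rw [hi, neg_zero, zero_mul]
  -- otherwise `hermForm e` vanishes on all of `U`, where the shift is nilpotent
  have pow_eq (n : ℕ) (w : Fin (p+q+2) → ℂ) : hermForm p q e ((shiftOp A μ i ^ n) w) =
      (-(c i + star (μ i))) ^ n * hermForm p q e w := by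
    induction n generalizing w with
    | zero => simp
    | succ n ih =>
      rw [pow_succ', Module.End.mul_apply, hermForm_shiftOp_of_eigen (hA i) (hc i), ih, pow_succ']
      ring
  have := pow_eq K v
  rw [pow_apply_eq_zero_of_iterate_iSupMap_eq_bot hK i hv, map_zero] at this
  rw [(mul_eq_zero.mp this.symm).resolve_left (pow_ne_zero _ (neg_ne_zero.mpr hi)), mul_zero]

theorem iSupMap_shiftOp_le_lightlikePerp (hA : IsTwoPointStabilizer A) {K : ℕ}
    (hK : (iSupMap (shiftOp A μ))^[K] U = ⊥) :
    iSupMap (shiftOp A μ) U ≤ lightlikePerp p q := by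
  intro v hv x hx
  obtain ⟨a, b, rfl⟩ := mem_span_pair.mp hx
  simp [LinearMap.mem_ker.mp (iSupMap_shiftOp_le_ker_hermForm hA.skew hA.eigen_zero hK hv),
    LinearMap.mem_ker.mp (iSupMap_shiftOp_le_ker_hermForm hA.skew hA.eigen_one hK hv)]

theorem iSupMap_shiftOp_inf_lightlikePerp_le (hA : IsTwoPointStabilizer A)
    (hU : iSupMap (shiftOp A μ) U ≤ U) :
    iSupMap (shiftOp A μ) (U ⊓ lightlikePerp p q) ≤ U ⊓ lightlikePerp p q := by
  rw [iSupMap_le_iff]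
  rintro i v ⟨hvU, hvE⟩
  refine ⟨hU (apply_mem_iSupMap i hvU), fun x hx ↦ ?_⟩
  have := hermForm_shiftOp_add (μ := μ) (hA.skew i) x v
  rwa [hvE x hx, mul_zero,
    hvE _ (iSupMap_shiftOp_lightlikePlane_le hA (apply_mem_iSupMap i hx)), zero_add] at this

theorem iterate_le_orthogonalBilin (hA : IsTwoPointStabilizer A)
    (hU : iSupMap (shiftOp A μ) U ≤ U) {K : ℕ} (hK : (iSupMap (shiftOp A μ))^[K] U = ⊥)
    {m : ℕ} (hm : (iSupMap (shiftOp A μ))^[m] (U ⊓ lightlikePerp p q) ≤ lightlikePlane p q)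
    {i j : ℕ} (hij : m ≤ i + j) :
    (iSupMap (shiftOp A μ))^[j] (U ⊓ lightlikePerp p q) ≤
      ((iSupMap (shiftOp A μ))^[i] (U ⊓ lightlikePerp p q)).orthogonalBilin (hermForm p q) := by
  have anti := iSupMap_mono.antitone_iterate_of_map_le (iSupMap_shiftOp_inf_lightlikePerp_le hA hU)
  -- either every shift is `hermForm`-skew, or one is not and then `U` is totally isotropic
  by_cases hself : ∀ k, μ k + star (μ k) = 0
  · induction j generalizing i with
    | zero => exact fun v hv x hx ↦ hv.2 x (hm (anti (by omega) hx))
    | succ j ih =>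
      rw [Function.iterate_succ_apply', iSupMap_le_iff]
      intro k v hv x hx
      have hx' := apply_mem_iSupMap (f := shiftOp A μ) k hx
      rw [← Function.iterate_succ_apply' (iSupMap _)] at hx'
      have := hermForm_shiftOp_add (μ := μ) (hA.skew k) x v
      rwa [hself k, neg_zero, zero_mul, ih (by omega) hv _ hx', zero_add] at this
  · push Not at hself
    obtain ⟨k, hk⟩ := hself
    have hUiso : U ≤ U.orthogonalBilin (hermForm p q) := fun v hv x hx ↦
      LinearMap.eq_zero_of_pow_apply_eq_zero _ (neg_ne_zero.mpr hk)
        (hermForm_shiftOp_add (hA.skew k)) (pow_apply_eq_zero_of_iterate_iSupMap_eq_bot hK k hx)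
        (pow_apply_eq_zero_of_iterate_iSupMap_eq_bot hK k hv)
    have hle (n : ℕ) : (iSupMap (shiftOp A μ))^[n] (U ⊓ lightlikePerp p q) ≤ U :=
      (anti (Nat.zero_le n)).trans inf_le_left
    exact (hle j).trans (hUiso.trans (orthogonalBilin_le (hle i)))

theorem iSupMap_shiftOp_inf_lightlikePlane_eq_bot (hA : IsTwoPointStabilizer A) {K : ℕ}
    (hK : (iSupMap (shiftOp A μ))^[K] U = ⊥) :
    iSupMap (shiftOp A μ) (U ⊓ lightlikePlane p q) = ⊥ := by
  rw [eq_bot_iff, iSupMap_le_iff]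
  rintro i v ⟨hvU, hvE⟩
  obtain ⟨a, b, rfl⟩ := mem_span_pair.mp hvE
  obtain ⟨c₀, hc₀⟩ := hA.eigen_zero i
  obtain ⟨c₁, hc₁⟩ := hA.eigen_one i
  exact (mem_bot ℂ).mpr (Module.End.apply_eq_zero_of_pow_apply_eq_zero (shiftOp_of_eigen hc₀)
    (shiftOp_of_eigen hc₁) linearIndependent_single_zero_one
    (pow_apply_eq_zero_of_iterate_iSupMap_eq_bot hK i hvU))

theorem exists_iterate_le_lightlikePlane (hp : 1 ≤ p) (hpq : p ≤ q) (hA : IsTwoPointStabilizer A)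
    (hU : iSupMap (shiftOp A μ) U ≤ U) {K : ℕ} (hK : (iSupMap (shiftOp A μ))^[K] U = ⊥) :
    ∃ m, m + 2 ≤ 2 * p + 1 ∧
      (iSupMap (shiftOp A μ))^[m] (U ⊓ lightlikePerp p q) ≤ lightlikePlane p q := by
  have hW := iSupMap_shiftOp_inf_lightlikePerp_le hA hU
  have hWK : (iSupMap (shiftOp A μ))^[K] (U ⊓ lightlikePerp p q) = ⊥ :=
    le_bot_iff.mp (hK ▸ iSupMap_mono.iterate K inf_le_left)
  obtain ⟨m, hmE, hlt⟩ := exists_iterate_iSupMap_le hW hWK (iSupMap_shiftOp_lightlikePlane_le hA)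
  refine ⟨m, ?_, hmE⟩
  -- the chain `G_j ⊔ lightlikePlane` drops in dimension at each step `j < m`, from at least
  -- `2 + m/2` at `j = m - m/2`, where it is totally isotropic
  have hiso := sup_le_orthogonalBilin_sup hermForm_isRefl
    (iterate_le_orthogonalBilin hA hU hK (m := m) hmE (i := m - m / 2) (j := m - m / 2)
      (by omega))
    (lightlikePlane_le_lightlikePerp hp hpq)
    ((iSupMap_mono.antitone_iterate_of_map_le hW (Nat.zero_le _)).trans inf_le_right)
  have hbound := finrank_le_of_le_orthogonalBilin hpq hiso
  have hchain := finrank_add_le_finrank_of_lt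
    (C := fun j ↦ (iSupMap (shiftOp A μ))^[j] _ ⊔ lightlikePlane p q) hlt (j := m - m / 2)
    (by omega)
  rw [sup_eq_right.mpr hmE, finrank_lightlikePlane] at hchain
  omega

theorem iterate_iSupMap_shiftOp_eq_bot (hp : 1 ≤ p) (hpq : p ≤ q) (hA : IsTwoPointStabilizer A)
    (hU : iSupMap (shiftOp A μ) U ≤ U) {K : ℕ} (hK : (iSupMap (shiftOp A μ))^[K] U = ⊥) :
    (iSupMap (shiftOp A μ))^[2 * p + 1] U = ⊥ := by
  obtain ⟨m, hm, hmE⟩ := exists_iterate_le_lightlikePlane hp hpq hA hU hK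
  have anti := iSupMap_mono.antitone_iterate_of_map_le hU
  have h₁ : (iSupMap (shiftOp A μ))^[m + 1] U ≤
      (iSupMap (shiftOp A μ))^[m] (U ⊓ lightlikePerp p q) := by
    rw [Function.iterate_succ_apply]
    exact iSupMap_mono.iterate m (le_inf hU (iSupMap_shiftOp_le_lightlikePerp hA hK))
  have h₂ := le_inf ((iSupMap_mono.iterate m inf_le_left).trans (anti (Nat.zero_le m))) hmE
  rw [eq_bot_iff, ← iSupMap_shiftOp_inf_lightlikePlane_eq_bot hA hK]
  calc _ ≤ (iSupMap (shiftOp A μ))^[m + 2] U := anti hm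
    _ = iSupMap (shiftOp A μ) ((iSupMap (shiftOp A μ))^[m + 1] U) :=
      Function.iterate_succ_apply' ..
    _ ≤ _ := iSupMap_mono (h₁.trans h₂)

end ShiftedOperators

theorem lowerCentralSeries_shiftedGenWeightSpace_eq_bot {p q : ℕ} (hp : 1 ≤ p) (hpq : p ≤ q)
    {N : LieSubalgebra ℝ (Matrix (Fin (p+q+2)) (Fin (p+q+2)) ℝ)} [LieRing.IsNilpotent N]
    (hso : ∀ X ∈ N, Xᵀ * JBig p q + JBig p q * X = 0)
    (hfix0 : ∀ X ∈ N, ∃ c : ℝ, X *ᵥ Pi.single 0 1 = c • Pi.single 0 1)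
    (hfix1 : ∀ X ∈ N, ∃ c : ℝ, X *ᵥ Pi.single 1 1 = c • Pi.single 1 1)
    (χ : LieModule.Weight ℂ (ℂ ⊗[ℝ] N) (Fin (p+q+2) → ℂ)) :
    LieModule.lowerCentralSeries ℂ (ℂ ⊗[ℝ] N)
      (LieModule.shiftedGenWeightSpace ℂ (ℂ ⊗[ℝ] N) (Fin (p+q+2) → ℂ) χ) (2 * p + 1) = ⊥ := by
  have hg := TensorProduct.span_range_one_tmul (R := ℝ) (A := ℂ) (M := N)
  have hT (x : N) : shiftOp (fun x : N ↦ (x : Matrix (Fin (p+q+2)) (Fin (p+q+2)) ℝ))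
      (fun x ↦ χ (1 ⊗ₜ x)) x =
      LieModule.toEnd ℂ (ℂ ⊗[ℝ] N) (Fin (p+q+2) → ℂ) (1 ⊗ₜ x) - χ (1 ⊗ₜ x) • 1 := by
    rw [LieSubalgebra.toEnd_one_tmul]
    rfl
  obtain ⟨K, hK⟩ := LieModule.IsNilpotent.nilpotent ℂ (ℂ ⊗[ℝ] N)
    (LieModule.shiftedGenWeightSpace ℂ (ℂ ⊗[ℝ] N) (Fin (p+q+2) → ℂ) χ)
  rw [LieModule.lowerCentralSeries_shiftedGenWeightSpace_eq_bot_iff hg χ hT] at hK ⊢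
  have hA : IsTwoPointStabilizer fun x : N ↦ (x : Matrix (Fin (p+q+2)) (Fin (p+q+2)) ℝ) :=
    ⟨fun x ↦ hso x x.2,
      fun x ↦ (hfix0 x x.2).elim fun c hc ↦ ⟨c, complexify_single_of_mulVec_single hc⟩,
      fun x ↦ (hfix1 x x.2).elim fun c hc ↦ ⟨c, complexify_single_of_mulVec_single hc⟩⟩
  exact iterate_iSupMap_shiftOp_eq_bot hp hpq hA (LieModule.iSupMap_genWeightSpace_le χ hT) hK

end TwoPointStabilizer

/-- Let `p ≥ 1` and let `𝔫 ⊆ 𝔬(p+1,q+1)` be a nilpotent Lie subalgebra each of whose elements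
preserves the two isotropic lines `ℝe₀` and `ℝe₁` (i.e. `𝔫` fixes the two points `[e₀]`, `[e₁]`
of the lightlike geodesic `Λ`).  Then `𝔫_{2p} = 0`. -/
theorem two_point_stabilizer_degree_bound (p q : ℕ) (hp : 1 ≤ p) (hpq : p ≤ q)
    (N : LieSubalgebra ℝ (Matrix (Fin (p+q+2)) (Fin (p+q+2)) ℝ))
    (hso : ∀ X ∈ N, Xᵀ * JBig p q + JBig p q * X = 0)
    (hnil : LieRing.IsNilpotent N)
    (hfix0 : ∀ X ∈ N, ∃ c : ℝ, X *ᵥ (Pi.single 0 1 : Fin (p+q+2) → ℝ)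
      = c • (Pi.single 0 1 : Fin (p+q+2) → ℝ))
    (hfix1 : ∀ X ∈ N, ∃ c : ℝ, X *ᵥ (Pi.single 1 1 : Fin (p+q+2) → ℝ)
      = c • (Pi.single 1 1 : Fin (p+q+2) → ℝ)) :
    LieModule.lowerCentralSeries ℝ N N (2*p) = ⊥ := by
  rw [eq_bot_iff]
  intro z hz
  have hz' : (1 : ℂ) ⊗ₜ[ℝ] z ∈ LieModule.lowerCentralSeries ℂ (ℂ ⊗[ℝ] N) (ℂ ⊗[ℝ] N) (2 * p) := by
    rw [LieSubmodule.lowerCentralSeries_tensor_eq_baseChange]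
    exact Submodule.tmul_mem_baseChange_of_mem 1 hz
  have h := LieModule.toEnd_eq_zero_of_mem_lowerCentralSeries (M := Fin (p+q+2) → ℂ) (by omega)
    (TwoPointStabilizer.lowerCentralSeries_shiftedGenWeightSpace_eq_bot hp hpq hso hfix0 hfix1) hz'
  rw [LieSubalgebra.toEnd_one_tmul, ← map_zero complexify] at h
  exact (LieSubmodule.mem_bot _).mpr (Subtype.ext (complexify_injective h))
end

section
/- For all b, c ∈ ℝⁿ and every nonzero u ∈ ℝⁿ with Q^{p,q}(u) = 0, the limits lim_{t→+∞} φ(c + tu) and lim_{t→+∞} φ(b + tu) in ℝP^{n+1} coincide if and only if ⟨b − c, u⟩ = 0. -/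
/-!
On a lightlike line, `Q(c + tu) = Q(c) + 2t⟨c, u⟩` is affine in `t`, so the lift of `φ(c + tu)` is
`(−½Q(c), c, 1) + t (−⟨c, u⟩, u, 0)`. Hence `φ(c + tu)` tends to `[−⟨c, u⟩ : u : 0]`, and two such
points with the same `u ≠ 0` coincide exactly when their first coordinates agree. Limits are
unique because the projective space is Hausdorff: `[v] ↦ v vᵀ / (v ⬝ᵥ v)` is a continuous
injection into matrices.
-/
open Matrix Filter

noncomputable instance projTop (K V : Type*) [DivisionRing K] [AddCommGroup V] [Module K V]
    [TopologicalSpace V] : TopologicalSpace (Projectivization K V) :=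
  inferInstanceAs (TopologicalSpace (Quotient (projectivizationSetoid K V)))

/-- The Gram matrix of `Q^{p,q}` on `ℝⁿ`, `n = p+q` (zero-based indexing). -/
noncomputable def JSmall (p q : ℕ) : Matrix (Fin (p+q)) (Fin (p+q)) ℝ :=
  fun i j => if ((i:ℕ) + (j:ℕ) = p+q-1 ∧ ((i:ℕ) < p ∨ q ≤ (i:ℕ)))
      ∨ (i = j ∧ p ≤ (i:ℕ) ∧ (i:ℕ) < q) then 1 else 0

/-- The lift `(−½Q^{p,q}(x), x₁, …, x_n, 1) ∈ ℝ^{n+2}` of the inverse stereographic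
projection. -/
noncomputable def stereoVec (p q : ℕ) (x : Fin (p+q) → ℝ) : Fin (p+q+2) → ℝ :=
  fun i => if (i:ℕ) = 0 then -(x ⬝ᵥ (JSmall p q *ᵥ x))/2
    else if h : 1 ≤ (i:ℕ) ∧ (i:ℕ) ≤ p+q then x ⟨(i:ℕ)-1, by omega⟩
    else 1

theorem stereoVec_ne_zero (p q : ℕ) (x : Fin (p+q) → ℝ) : stereoVec p q x ≠ 0 := by
  intro h
  have h1 := congrFun h ⟨p+q+1, by omega⟩
  simp only [stereoVec, Pi.zero_apply] at h1
  split_ifs at h1 <;> first | assumption | omega | exact one_ne_zero h1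

/-- The inverse stereographic projection `φ : ℝⁿ → ℝP^{n+1}`. -/
noncomputable def phiMap (p q : ℕ) (x : Fin (p+q) → ℝ) :
    Projectivization ℝ (Fin (p+q+2) → ℝ) :=
  Projectivization.mk ℝ (stereoVec p q x) (stereoVec_ne_zero p q x)

open scoped Topology LinearAlgebra.Projectivization

theorem exists_tendsto_and_tendsto_iff_eq {α X : Type*} [TopologicalSpace X] [T2Space X]
    {l : Filter α} [l.NeBot] {f g : α → X} {a b : X} (hf : Tendsto f l (𝓝 a))
    (hg : Tendsto g l (𝓝 b)) :
    (∃ L, Tendsto f l (𝓝 L) ∧ Tendsto g l (𝓝 L)) ↔ a = b :=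
  ⟨fun ⟨_, hfL, hgL⟩ => (tendsto_nhds_unique hf hfL).trans (tendsto_nhds_unique hgL hg),
    fun h => ⟨a, hf, h ▸ hg⟩⟩

theorem Matrix.IsSymm.add_smul_dotProduct_mulVec_add_smul {n R : Type*} [Fintype n] [CommRing R]
    {A : Matrix n n R} (hA : A.IsSymm) (c u : n → R) (t : R) :
    (c + t • u) ⬝ᵥ (A *ᵥ (c + t • u)) =
      c ⬝ᵥ (A *ᵥ c) + 2 * t * (c ⬝ᵥ (A *ᵥ u)) + t ^ 2 * (u ⬝ᵥ (A *ᵥ u)) := by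
  have hcomm : u ⬝ᵥ (A *ᵥ c) = c ⬝ᵥ (A *ᵥ u) := by
    rw [dotProduct_mulVec, ← mulVec_transpose, hA.eq, dotProduct_comm]
  simp only [mulVec_add, mulVec_smul, dotProduct_add, add_dotProduct, dotProduct_smul,
    smul_dotProduct, hcomm, smul_eq_mul]
  ring

theorem Fin.snoc_ne_zero {α : Type*} [Zero α] {n : ℕ} {u : Fin n → α} (hu : u ≠ 0) (x : α) :
    (Fin.snoc u x : Fin (n + 1) → α) ≠ 0 :=
  fun h => hu (funext fun k => by simpa using congrFun h k.castSucc)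

namespace Projectivization

theorem tendsto_mk {K V α : Type*} [DivisionRing K] [AddCommGroup V] [Module K V]
    [TopologicalSpace V] {l : Filter α} {g : α → V} (hg : ∀ a, g a ≠ 0) {w : V} (hw : w ≠ 0)
    (h : Tendsto g l (𝓝 w)) :
    Tendsto (fun a => mk K (g a) (hg a)) l (𝓝 (mk K w hw)) :=
  (continuous_quot_mk.tendsto _).comp (tendsto_subtype_rng.mpr h)

theorem tendsto_mk_add_smul_atTop {V : Type*} [AddCommGroup V] [Module ℝ V] [TopologicalSpace V]
    [IsTopologicalAddGroup V] [ContinuousSMul ℝ V] {v w : V} (hvw : ∀ t : ℝ, v + t • w ≠ 0)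
    (hw : w ≠ 0) :
    Tendsto (fun t : ℝ => mk ℝ (v + t • w) (hvw t)) atTop (𝓝 (mk ℝ w hw)) := by
  have hscaled (t : Set.Ioi (0 : ℝ)) : (t : ℝ)⁻¹ • (v + (t : ℝ) • w) ≠ 0 :=
    smul_ne_zero (inv_ne_zero t.2.ne') (hvw t)
  have hlim : Tendsto (fun t : ℝ => t⁻¹ • (v + t • w)) atTop (𝓝 w) := by
    have h := ((tendsto_inv_atTop_zero (𝕜 := ℝ)).smul_const v).add_const w
    rw [zero_smul, zero_add] at h
    refine h.congr' ?_
    filter_upwards [eventually_ne_atTop 0] with t ht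
    rw [smul_add, smul_smul, inv_mul_cancel₀ ht, one_smul]
  rw [← tendsto_comp_val_Ioi_atTop (a := 0)]
  refine (tendsto_mk hscaled hw (tendsto_comp_val_Ioi_atTop.mpr hlim)).congr fun t => ?_
  exact (mk_eq_mk_iff' ℝ _ _ _ _).mpr ⟨(t : ℝ)⁻¹, rfl⟩

theorem mk_vecCons_eq_mk_vecCons_iff {K : Type*} [DivisionRing K] {n : ℕ} {a b : K}
    {v : Fin n → K} (hv : v ≠ 0) (ha : vecCons a v ≠ 0) (hb : vecCons b v ≠ 0) :
    mk K (vecCons a v) ha = mk K (vecCons b v) hb ↔ a = b := by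
  refine ⟨fun h => ?_, fun h => by subst h; rfl⟩
  obtain ⟨k, hk⟩ := (mk_eq_mk_iff' K _ _ ha hb).mp h
  rw [smul_cons, vecCons_inj] at hk
  have hk1 : k = 1 := smul_left_injective K hv (hk.2.trans (one_smul K v).symm)
  simpa [hk1] using hk.1.symm

section Hausdorff

variable {ι : Type*} [Fintype ι]

noncomputable def lineProjectionMatrix : ℙ ℝ (ι → ℝ) → Matrix ι ι ℝ :=
  Projectivization.lift (fun v => (v.1 ⬝ᵥ v.1)⁻¹ • vecMulVec v.1 v.1) <| by
    rintro ⟨-, hv⟩ ⟨w, hw⟩ t rfl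
    have ht : t ≠ 0 := left_ne_zero_of_smul hv
    have hww : w ⬝ᵥ w ≠ 0 := fun h => hw (dotProduct_self_eq_zero.mp h)
    simp only [smul_dotProduct, dotProduct_smul, smul_vecMulVec, vecMulVec_smul, smul_smul,
      smul_eq_mul]
    congr 1
    field_simp

theorem lineProjectionMatrix_mk (v : ι → ℝ) (hv : v ≠ 0) :
    lineProjectionMatrix (mk ℝ v hv) = (v ⬝ᵥ v)⁻¹ • vecMulVec v v := rfl

theorem continuous_lineProjectionMatrix : Continuous (lineProjectionMatrix (ι := ι)) := by
  refine continuous_quot_lift _ ?_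
  have hval : Continuous fun v : {v : ι → ℝ // v ≠ 0} => v.1 := continuous_subtype_val
  exact ((hval.dotProduct hval).inv₀ fun v h => v.2 (dotProduct_self_eq_zero.mp h)).smul
    (hval.matrix_vecMulVec hval)

theorem lineProjectionMatrix_injective : Function.Injective (lineProjectionMatrix (ι := ι)) := by
  intro x y h
  induction x using Projectivization.ind with | h v hv =>
  induction y using Projectivization.ind with | h w hw =>
  rw [lineProjectionMatrix_mk, lineProjectionMatrix_mk] at h
  obtain ⟨i, hi⟩ := Function.ne_iff.mp hv
  have hvv : (v ⬝ᵥ v)⁻¹ ≠ 0 := inv_ne_zero fun h => hv (dotProduct_self_eq_zero.mp h)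
  refine (mk_eq_mk_iff' ℝ _ _ hv hw).mpr
    ⟨(w ⬝ᵥ w)⁻¹ * w i / ((v ⬝ᵥ v)⁻¹ * v i), funext fun j => ?_⟩
  have hij := congrFun (congrFun h i) j
  simp only [Matrix.smul_apply, vecMulVec_apply, smul_eq_mul] at hij
  rw [Pi.smul_apply, smul_eq_mul, div_mul_eq_mul_div, div_eq_iff (mul_ne_zero hvv hi)]
  linear_combination -hij

instance : T2Space (ℙ ℝ (ι → ℝ)) :=
  .of_injective_continuous lineProjectionMatrix_injective continuous_lineProjectionMatrix

end Hausdorff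

end Projectivization

theorem JSmall_isSymm (p q : ℕ) : (JSmall p q).IsSymm := by
  ext i j
  simp only [JSmall, transpose_apply, Fin.ext_iff]
  have hi := i.isLt
  have hj := j.isLt
  split_ifs <;> first | rfl | omega

theorem stereoVec_eq_vecCons (p q : ℕ) (x : Fin (p+q) → ℝ) :
    stereoVec p q x = vecCons (-(x ⬝ᵥ (JSmall p q *ᵥ x)) / 2) (Fin.snoc x 1) := by
  ext i
  refine Fin.cases ?_ (fun j => Fin.lastCases ?_ (fun k => ?_) j) i
  · simp [stereoVec]
  · rw [cons_val_succ, Fin.snoc_last]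
    simp [stereoVec]
  · simp [stereoVec]

theorem stereoVec_add_smul_of_null (p q : ℕ) (c : Fin (p+q) → ℝ) {u : Fin (p+q) → ℝ}
    (hnull : u ⬝ᵥ (JSmall p q *ᵥ u) = 0) (t : ℝ) :
    stereoVec p q (c + t • u) =
      stereoVec p q c + t • vecCons (-(c ⬝ᵥ (JSmall p q *ᵥ u))) (Fin.snoc u 0) := by
  rw [stereoVec_eq_vecCons, stereoVec_eq_vecCons, smul_cons, cons_add_cons,
    (JSmall_isSymm p q).add_smul_dotProduct_mulVec_add_smul, hnull]
  congr 1
  · simp only [smul_eq_mul]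
    ring
  · ext j
    refine Fin.lastCases ?_ (fun k => ?_) j <;> simp

theorem tendsto_phiMap_add_smul_atTop (p q : ℕ) (c : Fin (p+q) → ℝ) {u : Fin (p+q) → ℝ}
    (hu : u ≠ 0) (hnull : u ⬝ᵥ (JSmall p q *ᵥ u) = 0) :
    Tendsto (fun t : ℝ => phiMap p q (c + t • u)) atTop
      (𝓝 (Projectivization.mk ℝ (vecCons (-(c ⬝ᵥ (JSmall p q *ᵥ u))) (Fin.snoc u 0))
        (cons_nonzero_iff.mpr (.inr (Fin.snoc_ne_zero hu 0))))) := by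
  have hvw (t : ℝ) :
      stereoVec p q c + t • vecCons (-(c ⬝ᵥ (JSmall p q *ᵥ u))) (Fin.snoc u 0) ≠ 0 :=
    stereoVec_add_smul_of_null p q c hnull t ▸ stereoVec_ne_zero p q _
  simpa only [phiMap, stereoVec_add_smul_of_null p q c hnull] using
    Projectivization.tendsto_mk_add_smul_atTop hvw _

theorem stereo_lightlike_lines_same_limit_iff_general (p q : ℕ)
    (b c u : Fin (p+q) → ℝ) (hu : u ≠ 0)
    (hnull : u ⬝ᵥ (JSmall p q *ᵥ u) = 0) :
    (∃ L : Projectivization ℝ (Fin (p+q+2) → ℝ),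
        Tendsto (fun t : ℝ => phiMap p q (c + t • u)) atTop (nhds L) ∧
        Tendsto (fun t : ℝ => phiMap p q (b + t • u)) atTop (nhds L)) ↔
      (b - c) ⬝ᵥ (JSmall p q *ᵥ u) = 0 := by
  rw [exists_tendsto_and_tendsto_iff_eq (tendsto_phiMap_add_smul_atTop p q c hu hnull)
      (tendsto_phiMap_add_smul_atTop p q b hu hnull),
    Projectivization.mk_vecCons_eq_mk_vecCons_iff (Fin.snoc_ne_zero hu 0), neg_inj,
    sub_dotProduct, sub_eq_zero, eq_comm]

/-- For all `b, c ∈ ℝⁿ` and every nonzero null vector `u`, the limits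
`lim_{t→+∞} φ(c + tu)` and `lim_{t→+∞} φ(b + tu)` in `ℝP^{n+1}` coincide if and only if
`⟨b − c, u⟩ = 0`. -/
theorem stereo_lightlike_lines_same_limit_iff (p q : ℕ) (hp : 1 ≤ p) (hpq : p ≤ q)
    (hn : 3 ≤ p+q) (b c u : Fin (p+q) → ℝ) (hu : u ≠ 0)
    (hnull : u ⬝ᵥ (JSmall p q *ᵥ u) = 0) :
    (∃ L : Projectivization ℝ (Fin (p+q+2) → ℝ),
        Tendsto (fun t : ℝ => phiMap p q (c + t • u)) atTop (nhds L) ∧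
        Tendsto (fun t : ℝ => phiMap p q (b + t • u)) atTop (nhds L)) ↔
      (b - c) ⬝ᵥ (JSmall p q *ᵥ u) = 0 :=
  stereo_lightlike_lines_same_limit_iff_general p q b c u hu hnull
end
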